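/- Let $k$ be a field of characteristic different from $2$, let $V$ be a finite-dimensional $k$-vector space, and let $u,v,w \colon V \to k$ be linear forms such that the quadratic form $S(x) = w(x)^{2} - u(x)v(x)$ is not the square of a linear form (i.e. there is no linear form $z$ with $S(x) = z(x)^{2}$ for all $x$). Then the rank of $S$ equals the dimension of the linear span of $\{u,v,w\}$ in the dual space of $V$. -/
import Mathlib


/-- The symmetric bilinear form `Q(x,y) = w(x)w(y) - ½(u(x)v(y) + u(y)v(x))`
associated to the quadratic form `S = w² - uv`. -/
noncomputable def assocBilin {k V : Type*} [Field k] [AddCommGroup V] [Module k V]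
    (u v w : V →ₗ[k] k) : V →ₗ[k] V →ₗ[k] k :=
  w.smulRight w - (2⁻¹ : k) • (u.smulRight v + v.smulRight u)

/-- The rank of the quadratic form `S = w² - uv`, i.e. the rank of its
associated symmetric bilinear form. -/
noncomputable def rankS {k V : Type*} [Field k] [AddCommGroup V] [Module k V]
    (u v w : V →ₗ[k] k) : ℕ :=
  Module.finrank k (LinearMap.range (assocBilin u v w))

theorem ker_assocBilin_eq {k V : Type*} [Field k] [AddCommGroup V]
    [Module k V] (h2 : (2 : k) ≠ 0) (u v w : V →ₗ[k] k)
    (hS : ¬ ∃ z : V →ₗ[k] k, ∀ x, w x ^ 2 - u x * v x = z x ^ 2) :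
    LinearMap.ker (assocBilin u v w) = (Submodule.span k {u, v, w}).dualCoannihilator := by
  have hhalf : (2⁻¹ : k) + 2⁻¹ = 1 := by rw [← two_mul]; exact mul_inv_cancel₀ h2
  ext x
  rw [LinearMap.mem_ker, Submodule.mem_dualCoannihilator]
  constructor
  · intro hx
    have hB : ∀ y, w x * w y - (2⁻¹ * (u x * v y) + 2⁻¹ * (u y * v x)) = 0 := by
      intro y
      have := congrArg (fun f : V →ₗ[k] k => f y) hx
      simpa [assocBilin, mul_comm] using this
    have hB2 : ∀ y, 2 * (w x * w y) = u x * v y + u y * v x := by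
      intro y
      linear_combination 2 * (hB y) + (u x * v y + u y * v x) * hhalf
    have hcc : w x * w x = u x * v x :=
      mul_left_cancel₀ h2 (by linear_combination hB2 x)
    have habc : u x = 0 ∧ v x = 0 ∧ w x = 0 := by
      by_contra hcon
      apply hS
      by_cases hc : w x = 0
      · have hab : u x * v x = 0 := by rw [← hcc, hc, mul_zero]
        have key : ∀ y, u x * v y + u y * v x = 0 := by
          intro y
          linear_combination -(hB2 y) + 2 * w y * hc
        rcases mul_eq_zero.mp hab with ha | hb'
        · by_cases hb0 : v x = 0
          · exact absurd ⟨ha, hb0, hc⟩ hcon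
          · refine ⟨w, fun y => ?_⟩
            have hy := key y
            rw [ha, zero_mul, zero_add] at hy
            have hu : u y = 0 := by
              rcases mul_eq_zero.mp hy with h | h
              · exact h
              · exact absurd h hb0
            rw [hu, zero_mul, sub_zero]
        · by_cases ha0 : u x = 0
          · exact absurd ⟨ha0, hb', hc⟩ hcon
          · refine ⟨w, fun y => ?_⟩
            have hy := key y
            rw [hb', mul_zero, add_zero] at hy
            have hv : v y = 0 := by
              rcases mul_eq_zero.mp hy with h | h
              · exact absurd h ha0
              · exact h
            rw [hv, mul_zero, sub_zero]
      · refine ⟨(2 * w x)⁻¹ • (u x • v - v x • u), fun y => ?_⟩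
        have h2c : (2 * w x) ≠ 0 := mul_ne_zero h2 hc
        simp only [LinearMap.smul_apply, LinearMap.sub_apply, smul_eq_mul]
        field_simp
        linear_combination (2 * w x * w y + u x * v y + u y * v x) * (hB2 y) -
          4 * (u y * v y) * hcc
    intro f hf
    refine Submodule.span_induction ?_ ?_ ?_ ?_ hf
    · intro g hg
      simp only [Set.mem_insert_iff, Set.mem_singleton_iff] at hg
      rcases hg with rfl | rfl | rfl
      · exact habc.1
      · exact habc.2.1
      · exact habc.2.2
    · simp
    · intro g h _ _ hg hh
      simp [hg, hh]
    · intro cst g _ hg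
      simp [hg]
  · intro hx
    have hu : u x = 0 := hx u (Submodule.subset_span (by simp))
    have hv : v x = 0 := hx v (Submodule.subset_span (by simp))
    have hw : w x = 0 := hx w (Submodule.subset_span (by simp))
    ext y
    simp [assocBilin, hu, hv, hw]

/-- If the quadratic form `S = w² - uv` is not the square of a linear form, then
its rank equals the dimension of the span of `{u, v, w}` in the dual space. -/
theorem rank_eq_finrank_span_of_not_square {k V : Type*} [Field k] [AddCommGroup V]
    [Module k V] [FiniteDimensional k V] (h2 : (2 : k) ≠ 0) (u v w : V →ₗ[k] k)
    (hS : ¬ ∃ z : V →ₗ[k] k, ∀ x, w x ^ 2 - u x * v x = z x ^ 2) :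
    rankS u v w = Module.finrank k (Submodule.span k {u, v, w}) := by
  have hker := ker_assocBilin_eq h2 u v w hS
  have h1 := LinearMap.finrank_range_add_finrank_ker (assocBilin u v w)
  rw [hker] at h1
  have h3 : Module.finrank k (Submodule.span k ({u, v, w} : Set (V →ₗ[k] k))) +
      Module.finrank k (Submodule.span k ({u, v, w} : Set (V →ₗ[k] k))).dualCoannihilator =
      Module.finrank k V :=
    Subspace.finrank_add_finrank_dualCoannihilator_eq _
  unfold rankS
  omega
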